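/- arXiv:1309.2562 — 4 statements merged into one kernel-verified Lean document; each statement's English description precedes it below -/
import Mathlib

section
/- For every function t : ℕ → ℝ there exists a function r : ℕ → [0,∞) with t(n) = o(r(n)) as n → ∞, such that for every sequence p : ℕ → ℕ satisfying, for each n ≥ 1, either p_n = 1 or p_n is a prime with p_n ≡ 1 (mod n), it is NOT the case that (∑_{d | n} log p_d)/r(n) → 1 as n → ∞. -/
theorem exists_unattainable_growth_rate (t : ℕ → ℝ) :
    ∃ r : ℕ → ℝ, (∀ n : ℕ, 0 ≤ r n) ∧
      t =o[Filter.atTop] r ∧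
      ∀ p : ℕ → ℕ,
        (∀ n : ℕ, 1 ≤ n → p n = 1 ∨ ((p n).Prime ∧ p n ≡ 1 [MOD n])) →
        ¬ Filter.Tendsto
            (fun n : ℕ => (∑ d ∈ n.divisors, Real.log (p d)) / r n)
            Filter.atTop (nhds 1) := by
  set B : ℕ → ℝ := fun n => (n + 1) * (1 + |t n|) with hB
  have hBpos : ∀ n, 0 < B n := by
    intro n
    apply mul_pos
    · positivity
    · positivity
  set r : ℕ → ℝ := fun n => if Odd n then 3 * B (2 * n) + B n else B n with hr
  have hrB : ∀ n, B n ≤ r n := by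
    intro n
    simp only [hr]
    split
    · nlinarith [hBpos (2 * n)]
    · exact le_rfl
  have hrpos : ∀ n, 0 < r n := fun n => lt_of_lt_of_le (hBpos n) (hrB n)
  refine ⟨r, fun n => (hrpos n).le, ?_, ?_⟩
  · rw [Asymptotics.isLittleO_iff]
    intro c hc
    filter_upwards [Filter.eventually_ge_atTop ⌈1 / c⌉₊] with n hn
    have h1 : |t n| ≤ B n / (n + 1) := by
      rw [le_div_iff₀ (by positivity)]
      show |t n| * ((n:ℝ) + 1) ≤ ((n:ℝ) + 1) * (1 + |t n|)
      nlinarith [abs_nonneg (t n)]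
    have h2 : (1 : ℝ) / c ≤ n + 1 := by
      calc (1 : ℝ) / c ≤ ⌈1 / c⌉₊ := Nat.le_ceil _
        _ ≤ n := Nat.cast_le.mpr hn
        _ ≤ n + 1 := by linarith
    have h3 : B n / (n + 1) ≤ c * B n := by
      rw [div_le_iff₀ (by positivity)]
      have : 1 ≤ c * (n + 1) := by
        rw [div_le_iff₀ hc] at h2
        linarith
      nlinarith [hBpos n]
    calc |t n| ≤ c * B n := h1.trans h3
      _ ≤ c * r n := by nlinarith [hrB n, hrpos n]
      _ ≤ c * |r n| := by rw [abs_of_pos (hrpos n)]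
  · intro p hp htend
    set S : ℕ → ℝ := fun m => ∑ d ∈ m.divisors, Real.log (p d) with hS
    have hlog : ∀ (m : ℕ), ∀ d ∈ Nat.divisors m, (0:ℝ) ≤ Real.log (p d) := by
      intro m d hd
      have hd1 : 1 ≤ d := (Nat.pos_of_mem_divisors hd)
      rcases hp d hd1 with h | h
      · simp [h]
      · exact Real.log_nonneg (by exact_mod_cast h.1.one_lt.le)
    have hev := htend.eventually (Ioo_mem_nhds (by norm_num : (1:ℝ)/2 < 1)
      (by norm_num : (1:ℝ) < 3/2))
    obtain ⟨N, hN⟩ := hev.exists_forall_of_atTop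
    set n := 2 * N + 1 with hn
    have hodd : Odd n := ⟨N, by omega⟩
    have hnge : N ≤ n := by omega
    have h2nge : N ≤ 2 * n := by omega
    have hmono : S n ≤ S (2 * n) := by
      apply Finset.sum_le_sum_of_subset_of_nonneg
      · exact Nat.divisors_subset_of_dvd (by omega) ⟨2, by ring⟩
      · intro d hd _
        exact hlog _ d hd
    have hA := hN n hnge
    have hC := hN (2 * n) h2nge
    have hrn : r n = 3 * B (2 * n) + B n := by simp [hr, hodd]
    have hr2n : r (2 * n) = B (2 * n) := by
      have : ¬ Odd (2 * n) := by simp [Nat.not_odd_iff_even, even_two_mul]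
      simp [hr, this]
    have h1 : r n / 2 < S n := by
      have := hA.1
      rw [lt_div_iff₀ (hrpos n)] at this
      linarith
    have h2 : S (2 * n) / r (2 * n) < 3 / 2 := hC.2
    rw [div_lt_iff₀ (hrpos (2 * n))] at h2
    rw [hrn] at h1
    rw [hr2n] at h2
    nlinarith [hBpos n, hBpos (2 * n), hmono]
end

section
/- Let p : ℕ → ℕ satisfy p_1 = 1 and, for each n ≥ 1, either p_n = 1 or p_n is a prime with p_n ≡ 1 (mod n). Let g : ℕ → ℕ satisfy g_n = 0 whenever p_n = 1, and let g_n be a primitive root modulo p_n (i.e. the residue of g_n generates the cyclic group (ℤ/p_nℤ)^×) whenever p_n is prime. Let G = ∏_{n≥1} ℤ/p_nℤ (direct product of additive groups) and define T : G → G coordinatewise by T(x)_n = g_n^{(p_n−1)/n}·x_n (and T(x)_n = x_n when p_n = 1). Then for every m ≥ 1 the set of fixed points of the m-th iterate T^m is finite and its cardinality equals ∏_{d | m} p_d. -/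
/-!
The iterate `T^[m]` multiplies the `n`-th coordinate by `a_n ^ m`, where
`a_n = g_n ^ ((p_n - 1) / n)` has multiplicative order exactly `n` when `p_n` is prime.
Since `ZMod p_n` is then a field, `a_n ^ m * x = x` forces `x = 0` unless `n ∣ m`, so the
fixed points of `T^[m]` are exactly the families supported on the divisors of `m`, with the
coordinates at the divisors free.
-/

open Finset

section SupportedFamilies

variable {ι : Type*} {β : ι → Type*} [∀ i, Zero (β i)]

lemma bijective_restrict_setOf_forall_notMem_eq_zero (s : Finset ι) :
    Function.Bijective
      (fun (x : {x : ∀ i, β i | ∀ i ∉ s, x i = 0}) (i : s) => x.1 i) := by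
  classical
  constructor
  · rintro ⟨x, hx⟩ ⟨y, hy⟩ hxy
    ext i
    change x i = y i
    by_cases hi : i ∈ s
    · exact congrFun hxy ⟨i, hi⟩
    · rw [hx i hi, hy i hi]
  · intro y
    refine ⟨⟨fun i => if hi : i ∈ s then y ⟨i, hi⟩ else 0, fun i hi => dif_neg hi⟩, ?_⟩
    funext i
    exact dif_pos i.2

lemma ncard_setOf_forall_notMem_eq_zero (s : Finset ι) :
    {x : ∀ i, β i | ∀ i ∉ s, x i = 0}.ncard = ∏ i ∈ s, Nat.card (β i) := by
  rw [← Nat.card_coe_set_eq, Nat.card_eq_of_bijective _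
    (bijective_restrict_setOf_forall_notMem_eq_zero s), Nat.card_pi]
  exact prod_coe_sort s fun i => Nat.card (β i)

lemma finite_setOf_forall_notMem_eq_zero [∀ i, Finite (β i)] (s : Finset ι) :
    {x : ∀ i, β i | ∀ i ∉ s, x i = 0}.Finite :=
  Set.finite_coe_iff.mp <|
    Finite.of_injective _ (bijective_restrict_setOf_forall_notMem_eq_zero s).injective

end SupportedFamilies

lemma ZMod.orderOf_pow_sub_one_div {q n g : ℕ} (hq : q.Prime) (hqn : q ≡ 1 [MOD n])
    (hg : orderOf (g : ZMod q) = q - 1) :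
    orderOf ((g : ZMod q) ^ ((q - 1) / n)) = n := by
  have hdvd : n ∣ q - 1 := (Nat.modEq_iff_dvd' hq.one_le).mp hqn.symm
  rw [← hg] at hdvd ⊢
  exact orderOf_pow_orderOf_div (by rw [hg]; exact Nat.sub_ne_zero_of_lt hq.one_lt) hdvd

lemma ZMod.pow_sub_one_div_pow_mul_eq_self_iff {q n g m : ℕ}
    (hq : q = 1 ∨ (q.Prime ∧ q ≡ 1 [MOD n])) (hg : q.Prime → orderOf (g : ZMod q) = q - 1)
    (x : ZMod q) :
    ((g : ZMod q) ^ ((q - 1) / n)) ^ m * x = x ↔ n ∣ m ∨ x = 0 := by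
  rcases hq with rfl | ⟨hq, hqn⟩
  · exact iff_of_true (Subsingleton.elim _ _) (Or.inr (Subsingleton.elim _ _))
  · have := Fact.mk hq
    rw [mul_left_eq_self₀, ← orderOf_dvd_iff_pow_eq_one, orderOf_pow_sub_one_div hq hqn (hg hq)]

theorem F_method_periodic_point_count_general (p g : ℕ → ℕ)
    (hp : ∀ n : ℕ, 1 ≤ n → p n = 1 ∨ ((p n).Prime ∧ p n ≡ 1 [MOD n]))
    (hg : ∀ n : ℕ, 1 ≤ n → (p n).Prime →
      orderOf ((g n : ZMod (p n))) = p n - 1)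
    (T : (∀ i : {k : ℕ // 1 ≤ k}, ZMod (p i)) → (∀ i : {k : ℕ // 1 ≤ k}, ZMod (p i)))
    (hT : ∀ (x : ∀ i : {k : ℕ // 1 ≤ k}, ZMod (p i)) (i : {k : ℕ // 1 ≤ k}),
      T x i = (g i : ZMod (p i)) ^ ((p i - 1) / (i : ℕ)) * x i)
    (m : ℕ) (hm : 1 ≤ m) :
    {x : ∀ i : {k : ℕ // 1 ≤ k}, ZMod (p i) | T^[m] x = x}.Finite ∧
    {x : ∀ i : {k : ℕ // 1 ≤ k}, ZMod (p i) | T^[m] x = x}.ncard =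
      ∏ d ∈ m.divisors, p d := by
  have (i : {k : ℕ // 1 ≤ k}) : NeZero (p i) :=
    ⟨by rcases hp i i.2 with h | h <;> [omega; exact h.1.ne_zero]⟩
  have hfix : {x | T^[m] x = x} =
      {x : ∀ i : {k : ℕ // 1 ≤ k}, ZMod (p i) | ∀ i ∉ m.divisors.subtype (1 ≤ ·), x i = 0} := by
    have hTmul :
        T = ((fun i : {k : ℕ // 1 ≤ k} => (g i : ZMod (p i)) ^ ((p i - 1) / (i : ℕ))) * ·) :=
      funext fun x => funext (hT x)
    ext x
    simp only [Set.mem_ofPred_eq, hTmul, mul_left_iterate, funext_iff, Pi.mul_apply, Pi.pow_apply,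
      ZMod.pow_sub_one_div_pow_mul_eq_self_iff (hp _ (Subtype.prop _)) (hg _ (Subtype.prop _)),
      mem_subtype, Nat.mem_divisors, ne_eq, Nat.one_le_iff_ne_zero.mp hm, not_false_eq_true,
      and_true, or_iff_not_imp_left]
  refine ⟨hfix ▸ finite_setOf_forall_notMem_eq_zero _, ?_⟩
  rw [hfix, ncard_setOf_forall_notMem_eq_zero,
    prod_congr rfl fun (i : {k : ℕ // 1 ≤ k}) _ => Nat.card_zmod (p i), prod_subtype_eq_prod_filter,
    filter_true_of_mem (p := (1 ≤ ·)) fun d hd => Nat.pos_of_mem_divisors hd]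

theorem F_method_periodic_point_count (p g : ℕ → ℕ)
    (hp1 : p 1 = 1)
    (hp : ∀ n : ℕ, 1 ≤ n → p n = 1 ∨ ((p n).Prime ∧ p n ≡ 1 [MOD n]))
    (hg1 : ∀ n : ℕ, 1 ≤ n → p n = 1 → g n = 0)
    (hg : ∀ n : ℕ, 1 ≤ n → (p n).Prime →
      orderOf ((g n : ZMod (p n))) = p n - 1)
    (T : (∀ i : {k : ℕ // 1 ≤ k}, ZMod (p i)) → (∀ i : {k : ℕ // 1 ≤ k}, ZMod (p i)))
    (hT : ∀ (x : ∀ i : {k : ℕ // 1 ≤ k}, ZMod (p i)) (i : {k : ℕ // 1 ≤ k}),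
      T x i = (g i : ZMod (p i)) ^ ((p i - 1) / (i : ℕ)) * x i)
    (m : ℕ) (hm : 1 ≤ m) :
    {x : ∀ i : {k : ℕ // 1 ≤ k}, ZMod (p i) | T^[m] x = x}.Finite ∧
    {x : ∀ i : {k : ℕ // 1 ≤ k}, ZMod (p i) | T^[m] x = x}.ncard =
      ∏ d ∈ m.divisors, p d :=
  F_method_periodic_point_count_general p g hp hg T hT m hm
end

section
/- Let κ be a real number with κ·log 2 > 2, and let r : ℕ → ℝ be a multiplicative function (i.e. r(mn) = r(m)·r(n) whenever gcd(m,n) = 1) with r(1) = 1 satisfying r(p^a) − r(p^{a−1}) > κ·a·log p for every prime p and every integer a ≥ 1. Then for every integer n ≥ 2, ∑_{d | n} μ(d)·r(n/d) > κ·log n. -/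
/-!
The convolution `g = μ * r` is multiplicative and `g (p ^ a) = r (p ^ a) - r (p ^ (a - 1))`,
which exceeds `c_p = κ a log p` when `p ^ a` exactly divides `n`. So `g n > ∏ c_p` while
`κ log n = ∑ c_p`, and since every `c_p ≥ κ log 2 > 2`, the sum is at most the product.
-/

open Finset ArithmeticFunction
open scoped ArithmeticFunction.Moebius

theorem Finset.sum_le_prod_of_two_le {ι R : Type*} [CommRing R] [LinearOrder R]
    [IsStrictOrderedRing R] {s : Finset ι} {c : ι → R} (hs : s.Nonempty)
    (hc : ∀ i ∈ s, 2 ≤ c i) : ∑ i ∈ s, c i ≤ ∏ i ∈ s, c i := by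
  induction hs using Finset.Nonempty.cons_induction with
  | singleton a => simp
  | cons a s ha hs ih =>
    simp only [mem_cons, forall_eq_or_imp] at hc
    obtain ⟨hca, hc⟩ := hc
    obtain ⟨b, hb⟩ := hs
    have hsum : 2 ≤ ∑ i ∈ s, c i := (hc b hb).trans <|
      single_le_sum (fun i hi => zero_le_two.trans (hc i hi)) hb
    rw [sum_cons, prod_cons]
    nlinarith [ih hc]

namespace ArithmeticFunction

variable {R : Type*}

def ofFun [Zero R] (f : ℕ → R) : ArithmeticFunction R :=
  ⟨fun n => if n = 0 then 0 else f n, if_pos rfl⟩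

theorem ofFun_apply [Zero R] (f : ℕ → R) {n : ℕ} (hn : n ≠ 0) : ofFun f n = f n :=
  if_neg hn

theorem isMultiplicative_ofFun [MonoidWithZero R] {f : ℕ → R}
    (hmul : ∀ m n : ℕ, m.Coprime n → f (m * n) = f m * f n) (h1 : f 1 = 1) :
    (ofFun f).IsMultiplicative := by
  refine IsMultiplicative.iff_ne_zero.2 ⟨by rw [ofFun_apply f one_ne_zero, h1], ?_⟩
  intro m n hm hn hmn
  rw [ofFun_apply f (mul_ne_zero hm hn), ofFun_apply f hm, ofFun_apply f hn, hmul m n hmn]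

theorem coe_moebius_mul_ofFun_apply [Ring R] (f : ℕ → R) (n : ℕ) :
    ((μ : ArithmeticFunction R) * ofFun f) n = ∑ d ∈ n.divisors, (μ d : R) * f (n / d) := by
  rw [mul_apply, ← Nat.sum_divisorsAntidiagonal (fun d e => (μ d : R) * f e)]
  refine sum_congr rfl fun x hx => ?_
  rw [intCoe_apply, ofFun_apply f (Nat.right_ne_zero_of_mem_divisorsAntidiagonal hx)]

theorem sum_divisors_moebius_mul_prime_pow [Ring R] (f : ℕ → R) {p a : ℕ} (hp : p.Prime)
    (ha : a ≠ 0) :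
    ∑ d ∈ (p ^ a).divisors, (μ d : R) * f (p ^ a / d) = f (p ^ a) - f (p ^ (a - 1)) := by
  rw [Nat.sum_divisors_prime_pow hp, ← Nat.sub_add_cancel (Nat.one_le_iff_ne_zero.2 ha),
    sum_range_succ', sum_range_succ', sum_eq_zero]
  · simp [moebius_apply_prime hp, pow_succ, hp.pos, sub_eq_neg_add]
  · intro i _
    simp [moebius_apply_prime_pow hp (Nat.succ_ne_zero (i + 1))]

end ArithmeticFunction

theorem two_le_mul_factorization_mul_log {κ : ℝ} (hκ : 2 ≤ κ * Real.log 2) {n p : ℕ}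
    (hp : p ∈ n.primeFactors) : 2 ≤ κ * (n.factorization p * Real.log p) := by
  have hκ0 : 0 ≤ κ := (pos_of_mul_pos_left (two_pos.trans_le hκ) (Real.log_pos one_lt_two).le).le
  have ha : (1 : ℝ) ≤ n.factorization p := by
    exact_mod_cast Nat.one_le_iff_ne_zero.2 (Finsupp.mem_support_iff.1 hp)
  have hlog : Real.log 2 ≤ Real.log p := Real.log_le_log two_pos
    (by exact_mod_cast (Nat.prime_of_mem_primeFactors hp).two_le)
  calc (2 : ℝ) ≤ κ * Real.log 2 := hκ
    _ ≤ κ * (1 * Real.log p) := by rw [one_mul]; gcongr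
    _ ≤ κ * (n.factorization p * Real.log p) := by gcongr

theorem moebius_sum_gt_kappa_log (κ : ℝ) (hκ : κ * Real.log 2 > 2) (r : ℕ → ℝ)
    (hmul : ∀ m n : ℕ, Nat.Coprime m n → r (m * n) = r m * r n)
    (hr1 : r 1 = 1)
    (hr : ∀ p a : ℕ, p.Prime → 1 ≤ a →
      r (p ^ a) - r (p ^ (a - 1)) > κ * a * Real.log p)
    (n : ℕ) (hn : 2 ≤ n) :
    ∑ d ∈ n.divisors, (ArithmeticFunction.moebius d : ℝ) * r (n / d) >
      κ * Real.log n := by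
  have hg : ((μ : ArithmeticFunction ℝ) * ofFun r).IsMultiplicative :=
    isMultiplicative_moebius.intCast.mul (isMultiplicative_ofFun hmul hr1)
  have hn0 : n ≠ 0 := by omega
  rw [← coe_moebius_mul_ofFun_apply, hg.multiplicative_factorization _ hn0,
    Real.log_nat_eq_sum_factorization, Finsupp.prod, Finsupp.sum, Nat.support_factorization,
    mul_sum, gt_iff_lt]
  have hlog_lt (p : ℕ) (hp : p ∈ n.primeFactors) :
      κ * (n.factorization p * Real.log p) < ((μ : ArithmeticFunction ℝ) * ofFun r)
        (p ^ n.factorization p) := by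
    have hpp := Nat.prime_of_mem_primeFactors hp
    have ha : n.factorization p ≠ 0 := Finsupp.mem_support_iff.1 hp
    rw [coe_moebius_mul_ofFun_apply, sum_divisors_moebius_mul_prime_pow r hpp ha, ← mul_assoc]
    exact hr p _ hpp (Nat.one_le_iff_ne_zero.2 ha)
  have htwo_le (p : ℕ) (hp : p ∈ n.primeFactors) : 2 ≤ κ * (n.factorization p * Real.log p) :=
    two_le_mul_factorization_mul_log hκ.le hp
  have hne : n.primeFactors.Nonempty := Nat.nonempty_primeFactors.2 (by omega)
  exact (sum_le_prod_of_two_le hne htwo_le).trans_lt <| prod_lt_prod_of_nonempty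
    (fun p hp => two_pos.trans_le (htwo_le p hp)) hlog_lt hne
end

section
/- For every positive integer k there is no sequence p : ℕ → ℕ satisfying, for each n ≥ 1, either p_n = 1 or p_n is a prime with p_n ≡ 1 (mod n), such that (∑_{d | n} log p_d)/(k·log n) → 1 as n → ∞. -/
/-!
Along `n = 2 ^ m` the divisor sum `a m = ∑_{i ≤ m} log p (2 ^ i)` would grow like `k m log 2`, so
its increments `log p (2 ^ (m + 1))` are `o(m)`. But each increment is either `0` or, since a prime
`≡ 1 [MOD 2 ^ (m + 1)]` exceeds `2 ^ (m + 1)`, at least `(m + 1) log 2`. Hence `a` is eventually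
constant and `a m / m → 0`, contradicting `a m / m → k log 2`.
-/

open Filter Topology

lemma Nat.lt_of_modEq_one {n q : ℕ} (h : q ≡ 1 [MOD n]) (hq : 1 < q) : n < q := by
  have hdvd : n ∣ q - 1 := (Nat.modEq_iff_dvd' hq.le).mp h.symm
  have := Nat.le_of_dvd (by omega) hdvd
  omega

lemma Real.log_eq_zero_or_log_le_of_modEq_one {n q : ℕ}
    (h : q = 1 ∨ (q.Prime ∧ q ≡ 1 [MOD n])) : Real.log q = 0 ∨ Real.log n ≤ Real.log q := by
  rcases h with rfl | ⟨hq, hmod⟩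
  · simp
  · refine .inr ?_
    rcases n.eq_zero_or_pos with rfl | hn
    · simpa using Real.log_natCast_nonneg q
    · exact Real.log_le_log (by exact_mod_cast hn)
        (by exact_mod_cast (Nat.lt_of_modEq_one hmod hq.one_lt).le)

lemma tendsto_sub_div_add_one_of_tendsto_div {a : ℕ → ℝ} {c : ℝ}
    (ha : Tendsto (fun m ↦ a m / m) atTop (𝓝 c)) :
    Tendsto (fun m : ℕ ↦ (a (m + 1) - a m) / (m + 1)) atTop (𝓝 0) := by
  have hsucc : Tendsto (fun m : ℕ ↦ a (m + 1) / (m + 1)) atTop (𝓝 c) := by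
    simpa using (tendsto_add_atTop_iff_nat 1).2 ha
  have hlim := hsucc.sub (ha.mul (tendsto_natCast_div_add_atTop (1 : ℝ)))
  rw [mul_one, sub_self] at hlim
  refine hlim.congr' ?_
  filter_upwards [eventually_ne_atTop 0] with m hm
  have : (m : ℝ) ≠ 0 := by exact_mod_cast hm
  field_simp

lemma eq_zero_of_tendsto_div_of_increment_gap {a : ℕ → ℝ} {c δ : ℝ} (hδ : 0 < δ)
    (ha : Tendsto (fun m ↦ a m / m) atTop (𝓝 c))
    (hgap : ∀ m : ℕ, a (m + 1) - a m = 0 ∨ δ * (m + 1) ≤ a (m + 1) - a m) : c = 0 := by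
  obtain ⟨N, hN⟩ := eventually_atTop.mp <|
    (tendsto_sub_div_add_one_of_tendsto_div ha).eventually (gt_mem_nhds hδ)
  have hstep : ∀ m ≥ N, a (m + 1) = a m := by
    intro m hm
    rcases hgap m with h | h
    · linarith
    · have := hN m hm
      rw [div_lt_iff₀ (by positivity)] at this
      linarith
  have hconst : ∀ m ≥ N, a m = a N := by
    intro m hm
    induction m, hm using Nat.le_induction with
    | base => rfl
    | succ m hm ih => rw [hstep m hm, ih]
  refine tendsto_nhds_unique ha ((tendsto_const_div_atTop_nhds_zero_nat (a N)).congr' ?_)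
  filter_upwards [eventually_ge_atTop N] with m hm
  rw [hconst m hm]

theorem no_polynomial_growth_F_method (k : ℕ) (hk : 1 ≤ k) :
    ¬ ∃ p : ℕ → ℕ,
        (∀ n : ℕ, 1 ≤ n → p n = 1 ∨ ((p n).Prime ∧ p n ≡ 1 [MOD n])) ∧
        Filter.Tendsto
          (fun n : ℕ => (∑ d ∈ n.divisors, Real.log (p d)) / (k * Real.log n))
          Filter.atTop (nhds 1) := by
  rintro ⟨p, hp, htend⟩
  set a : ℕ → ℝ := fun m ↦ ∑ d ∈ (2 ^ m).divisors, Real.log (p d)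
  have hslope : (k : ℝ) * Real.log 2 ≠ 0 := by
    have : (0 : ℝ) < k := by exact_mod_cast hk
    positivity
  have ha : Tendsto (fun m ↦ a m / m) atTop (𝓝 (k * Real.log 2)) := by
    have h := (htend.comp (tendsto_pow_atTop_atTop_of_one_lt (r := 2) one_lt_two)).mul_const
      ((k : ℝ) * Real.log 2)
    rw [one_mul] at h
    refine h.congr fun m ↦ ?_
    simp only [Function.comp_apply, Nat.cast_pow, Nat.cast_ofNat, Real.log_pow]
    rw [show (k : ℝ) * (m * Real.log 2) = m * (k * Real.log 2) by ring, div_mul_eq_div_div,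
      div_mul_cancel₀ _ hslope]
  have hgap : ∀ m : ℕ, a (m + 1) - a m = 0 ∨ Real.log 2 * (m + 1) ≤ a (m + 1) - a m := by
    intro m
    have hinc : a (m + 1) - a m = Real.log (p (2 ^ (m + 1))) := by
      simp only [a, Nat.sum_divisors_prime_pow Nat.prime_two, Finset.sum_range_succ _ (m + 1)]
      ring
    have := Real.log_eq_zero_or_log_le_of_modEq_one (hp (2 ^ (m + 1)) Nat.one_le_two_pow)
    rwa [Nat.cast_pow, Nat.cast_ofNat, Real.log_pow, Nat.cast_succ, mul_comm, ← hinc] at this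
  exact hslope (eq_zero_of_tendsto_div_of_increment_gap (Real.log_pos one_lt_two) ha hgap)
end
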